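/- arXiv:2409.19259 — 2 statements merged into one kernel-verified Lean document; each statement's English description precedes it below -/
import Mathlib

section
/- Let λ>0, ν∈ℝ, and let w:[0,1]→[0,1] be defined by w(p) = Φ((Φ⁻¹(p)+ν)/λ) for p∈(0,1), w(0)=0, w(1)=1, where Φ⁻¹ is the inverse of the standard normal cdf Φ. Set z₀ = ν/(λ²−1) when λ ≠ 1. Then: (a) if λ>1, w is strictly concave on (0,Φ(z₀)) and strictly convex on (Φ(z₀),1); (b) if λ∈(0,1), w is strictly convex on (0,Φ(z₀)) and strictly concave on (Φ(z₀),1); (c) if λ=1 and ν>0, w is strictly concave on (0,1); (d) if λ=1 and ν<0, w is strictly convex on (0,1). -/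
/-!
Writing `p = Φ z`, the chain rule gives `w' p = φ((z + ν)/λ) / (λ φ z)
= λ⁻¹ exp(((λ² - 1) z² - 2 ν z - ν²) / (2 λ²))`. The exponent has derivative
`((λ² - 1) z - ν) / λ²`, so `w'` increases or decreases in `z` according to the sign of
`(λ² - 1) z - ν`, which changes exactly at `z₀ = ν / (λ² - 1)` (or never, when `λ = 1`).
Since `Φ⁻¹` is increasing, the same holds for `w'` as a function of `p`.
-/

open MeasureTheory Set Filter Topology

/-- The standard normal density φ. -/
noncomputable def stdGaussianPdf (z : ℝ) : ℝ :=
  (Real.sqrt (2 * Real.pi))⁻¹ * Real.exp (-(z ^ 2) / 2)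

/-- The standard normal cumulative distribution function Φ. -/
noncomputable def stdGaussianCdf (x : ℝ) : ℝ :=
  ∫ z in Set.Iic x, stdGaussianPdf z

open Real ProbabilityTheory

theorem hasDerivAt_integral_Iic {E : Type*} [NormedAddCommGroup E] [NormedSpace ℝ E]
    [CompleteSpace E] {f : ℝ → E} (hf : Integrable f) {x : ℝ} (hfx : ContinuousAt f x) :
    HasDerivAt (fun y => ∫ t in Iic y, f t) (f x) x := by
  have split : (fun y => ∫ t in Iic y, f t) =
      fun y => (∫ t in Iic 0, f t) + ∫ t in (0)..y, f t := by
    funext y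
    rw [← intervalIntegral.integral_Iic_sub_Iic hf.integrableOn hf.integrableOn]
    abel
  rw [split]
  exact (intervalIntegral.integral_hasDerivAt_right hf.intervalIntegrable
    hf.aestronglyMeasurable.stronglyMeasurableAtFilter hfx).const_add _

lemma stdGaussianPdf_eq_gaussianPDFReal : stdGaussianPdf = gaussianPDFReal 0 1 := by
  ext z
  simp [stdGaussianPdf, gaussianPDFReal, neg_div]

lemma stdGaussianPdf_pos (z : ℝ) : 0 < stdGaussianPdf z :=
  stdGaussianPdf_eq_gaussianPDFReal ▸ gaussianPDFReal_pos 0 1 z one_ne_zero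

lemma continuous_stdGaussianPdf : Continuous stdGaussianPdf := by
  unfold stdGaussianPdf
  fun_prop

lemma integrable_stdGaussianPdf : Integrable stdGaussianPdf :=
  stdGaussianPdf_eq_gaussianPDFReal ▸ integrable_gaussianPDFReal 0 1

lemma integral_stdGaussianPdf : ∫ z, stdGaussianPdf z = 1 :=
  stdGaussianPdf_eq_gaussianPDFReal ▸ integral_gaussianPDFReal_eq_one 0 one_ne_zero

lemma stdGaussianPdf_div_stdGaussianPdf (a b : ℝ) :
    stdGaussianPdf a / stdGaussianPdf b = exp ((b ^ 2 - a ^ 2) / 2) := by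
  have hc : (√(2 * π))⁻¹ ≠ 0 := by positivity
  rw [stdGaussianPdf, stdGaussianPdf, mul_div_mul_left _ _ hc, ← exp_sub]
  ring_nf

lemma hasDerivAt_stdGaussianCdf (x : ℝ) : HasDerivAt stdGaussianCdf (stdGaussianPdf x) x :=
  hasDerivAt_integral_Iic integrable_stdGaussianPdf continuous_stdGaussianPdf.continuousAt

lemma stdGaussianCdf_strictMono : StrictMono stdGaussianCdf :=
  strictMono_of_deriv_pos fun x => (hasDerivAt_stdGaussianCdf x).deriv ▸ stdGaussianPdf_pos x

lemma stdGaussianCdf_mem_Ioo (x : ℝ) : stdGaussianCdf x ∈ Ioo (0 : ℝ) 1 := by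
  have nonneg : 0 ≤ stdGaussianCdf (x - 1) :=
    setIntegral_nonneg measurableSet_Iic fun z _ => (stdGaussianPdf_pos z).le
  have le_one : stdGaussianCdf (x + 1) ≤ 1 :=
    integral_stdGaussianPdf ▸ setIntegral_le_integral integrable_stdGaussianPdf
      (.of_forall fun z => (stdGaussianPdf_pos z).le)
  exact ⟨nonneg.trans_lt (stdGaussianCdf_strictMono (by linarith)),
    (stdGaussianCdf_strictMono (by linarith)).trans_le le_one⟩

section RightInverse

variable {F G : ℝ → ℝ} {s : Set ℝ}

lemma StrictMono.strictMonoOn_of_rightInvOn (hF : StrictMono F) (hG : RightInvOn G F s) :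
    StrictMonoOn G s :=
  fun p hp q hq hpq => hF.lt_iff_lt.1 (by rwa [hG hp, hG hq])

lemma StrictMono.continuousOn_of_rightInvOn (hF : StrictMono F) (hG : RightInvOn G F s)
    (hs : IsOpen s) (hFs : ∀ x, F x ∈ s) : ContinuousOn G s := by
  intro p hp
  have surj : G '' s = univ :=
    eq_univ_of_forall fun z => ⟨F z, hFs z, hF.injective (hG (hFs z))⟩
  refine (continuousAt_of_monotoneOn_of_image_mem_nhds
    (hF.strictMonoOn_of_rightInvOn hG).monotoneOn (hs.mem_nhds hp) ?_).continuousWithinAt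
  rw [surj]
  exact univ_mem

lemma StrictMono.hasDerivAt_of_rightInvOn (hF : StrictMono F) (hG : RightInvOn G F s)
    (hs : IsOpen s) (hFs : ∀ x, F x ∈ s) {p f' : ℝ} (hp : p ∈ s)
    (hF' : HasDerivAt F f' (G p)) (hf' : f' ≠ 0) : HasDerivAt G f'⁻¹ p :=
  hF'.of_local_left_inverse ((hF.continuousOn_of_rightInvOn hG hs hFs).continuousAt
    (hs.mem_nhds hp)) hf' (eventually_of_mem (hs.mem_nhds hp) hG)

end RightInverse

/-- The density of `N(-ν, λ²)` divided by that of `N(0, 1)`; it is `w' ∘ Φ`. -/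
noncomputable def gaussianLikelihoodRatio (lam ν z : ℝ) : ℝ :=
  stdGaussianPdf ((z + ν) / lam) / (lam * stdGaussianPdf z)

section LikelihoodRatio

variable {lam ν : ℝ}

lemma gaussianLikelihoodRatio_eq (z : ℝ) :
    gaussianLikelihoodRatio lam ν z = lam⁻¹ * exp ((z ^ 2 - ((z + ν) / lam) ^ 2) / 2) := by
  rw [gaussianLikelihoodRatio, ← stdGaussianPdf_div_stdGaussianPdf]
  ring

lemma hasDerivAt_gaussianLikelihoodRatio_exponent (hlam : lam ≠ 0) (z : ℝ) :
    HasDerivAt (fun z => (z ^ 2 - ((z + ν) / lam) ^ 2) / 2)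
      (((lam ^ 2 - 1) * z - ν) / lam ^ 2) z := by
  have h := ((hasDerivAt_pow 2 z).sub
    ((((hasDerivAt_id z).add_const ν).div_const lam).pow 2)).div_const 2
  refine h.congr_deriv ?_
  norm_num [id]
  field_simp
  ring

lemma strictMonoOn_gaussianLikelihoodRatio (hlam : 0 < lam) {T : Set ℝ} (hT : Convex ℝ T)
    (hsign : ∀ z ∈ interior T, ν < (lam ^ 2 - 1) * z) :
    StrictMonoOn (gaussianLikelihoodRatio lam ν) T := by
  have exponent_mono := strictMonoOn_of_deriv_pos hT
    (fun z _ => (hasDerivAt_gaussianLikelihoodRatio_exponent hlam.ne' (ν := ν) z).continuousAt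
      |>.continuousWithinAt)
    fun z hz => (hasDerivAt_gaussianLikelihoodRatio_exponent hlam.ne' z).deriv ▸
      div_pos (sub_pos.2 (hsign z hz)) (by positivity)
  intro x hx y hy hxy
  rw [gaussianLikelihoodRatio_eq, gaussianLikelihoodRatio_eq]
  exact mul_lt_mul_of_pos_left (exp_lt_exp.2 (exponent_mono hx hy hxy)) (inv_pos.2 hlam)

lemma strictAntiOn_gaussianLikelihoodRatio (hlam : 0 < lam) {T : Set ℝ} (hT : Convex ℝ T)
    (hsign : ∀ z ∈ interior T, (lam ^ 2 - 1) * z < ν) :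
    StrictAntiOn (gaussianLikelihoodRatio lam ν) T := by
  have exponent_anti := strictAntiOn_of_deriv_neg hT
    (fun z _ => (hasDerivAt_gaussianLikelihoodRatio_exponent hlam.ne' (ν := ν) z).continuousAt
      |>.continuousWithinAt)
    fun z hz => (hasDerivAt_gaussianLikelihoodRatio_exponent hlam.ne' z).deriv ▸
      div_neg_of_neg_of_pos (sub_neg.2 (hsign z hz)) (by positivity)
  intro x hx y hy hxy
  rw [gaussianLikelihoodRatio_eq, gaussianLikelihoodRatio_eq]
  exact mul_lt_mul_of_pos_left (exp_lt_exp.2 (exponent_anti hx hy hxy)) (inv_pos.2 hlam)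

end LikelihoodRatio

section Weighting

variable {lam ν : ℝ} {Φinv w : ℝ → ℝ}

lemma mapsTo_Ioo_zero_stdGaussianCdf (hΦinv : RightInvOn Φinv stdGaussianCdf (Ioo 0 1))
    (z : ℝ) : MapsTo Φinv (Ioo 0 (stdGaussianCdf z)) (Iio z) := fun p hp =>
  stdGaussianCdf_strictMono.lt_iff_lt.1 <| by
    rw [hΦinv ⟨hp.1, hp.2.trans (stdGaussianCdf_mem_Ioo z).2⟩]
    exact hp.2

lemma mapsTo_Ioo_stdGaussianCdf_one (hΦinv : RightInvOn Φinv stdGaussianCdf (Ioo 0 1))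
    (z : ℝ) : MapsTo Φinv (Ioo (stdGaussianCdf z) 1) (Ioi z) := fun p hp =>
  stdGaussianCdf_strictMono.lt_iff_lt.1 <| by
    rw [hΦinv ⟨(stdGaussianCdf_mem_Ioo z).1.trans hp.1, hp.2⟩]
    exact hp.1

lemma hasDerivAt_of_eqOn_stdGaussianCdf (hlam : lam ≠ 0)
    (hΦinv : RightInvOn Φinv stdGaussianCdf (Ioo 0 1))
    (hw : EqOn w (fun p => stdGaussianCdf ((Φinv p + ν) / lam)) (Ioo 0 1))
    {p : ℝ} (hp : p ∈ Ioo 0 1) : HasDerivAt w (gaussianLikelihoodRatio lam ν (Φinv p)) p := by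
  have hΦinv' : HasDerivAt Φinv (stdGaussianPdf (Φinv p))⁻¹ p :=
    stdGaussianCdf_strictMono.hasDerivAt_of_rightInvOn hΦinv isOpen_Ioo stdGaussianCdf_mem_Ioo
      hp (hasDerivAt_stdGaussianCdf _) (stdGaussianPdf_pos _).ne'
  have hcomp := (hasDerivAt_stdGaussianCdf _).comp p ((hΦinv'.add_const ν).div_const lam)
  refine (hcomp.congr_of_eventuallyEq
    (eventually_of_mem (isOpen_Ioo.mem_nhds hp) hw)).congr_deriv ?_
  rw [gaussianLikelihoodRatio]
  field_simp

lemma strictConvexOn_of_strictMonoOn_gaussianLikelihoodRatio (hlam : lam ≠ 0)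
    (hΦinv : RightInvOn Φinv stdGaussianCdf (Ioo 0 1))
    (hw : EqOn w (fun p => stdGaussianCdf ((Φinv p + ν) / lam)) (Ioo 0 1))
    {a b : ℝ} (hab : Ioo a b ⊆ Ioo 0 1) {T : Set ℝ} (hmaps : MapsTo Φinv (Ioo a b) T)
    (hmono : StrictMonoOn (gaussianLikelihoodRatio lam ν) T) :
    StrictConvexOn ℝ (Ioo a b) w := by
  have hderiv p (hp : p ∈ Ioo a b) := hasDerivAt_of_eqOn_stdGaussianCdf hlam hΦinv hw (hab hp)
  refine StrictMonoOn.strictConvexOn_of_deriv (convex_Ioo a b)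
    (fun p hp => (hderiv p hp).continuousAt.continuousWithinAt) ?_
  rw [interior_Ioo]
  exact (hmono.comp ((stdGaussianCdf_strictMono.strictMonoOn_of_rightInvOn hΦinv).mono hab)
    hmaps).congr fun p hp => (hderiv p hp).deriv.symm

lemma strictConcaveOn_of_strictAntiOn_gaussianLikelihoodRatio (hlam : lam ≠ 0)
    (hΦinv : RightInvOn Φinv stdGaussianCdf (Ioo 0 1))
    (hw : EqOn w (fun p => stdGaussianCdf ((Φinv p + ν) / lam)) (Ioo 0 1))
    {a b : ℝ} (hab : Ioo a b ⊆ Ioo 0 1) {T : Set ℝ} (hmaps : MapsTo Φinv (Ioo a b) T)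
    (hanti : StrictAntiOn (gaussianLikelihoodRatio lam ν) T) :
    StrictConcaveOn ℝ (Ioo a b) w := by
  have hderiv p (hp : p ∈ Ioo a b) := hasDerivAt_of_eqOn_stdGaussianCdf hlam hΦinv hw (hab hp)
  refine StrictAntiOn.strictConcaveOn_of_deriv (convex_Ioo a b)
    (fun p hp => (hderiv p hp).continuousAt.continuousWithinAt) ?_
  rw [interior_Ioo]
  exact (hanti.comp_strictMonoOn
    ((stdGaussianCdf_strictMono.strictMonoOn_of_rightInvOn hΦinv).mono hab) hmaps).congr
    fun p hp => (hderiv p hp).deriv.symm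

end Weighting

theorem stmt4_general (lam ν : ℝ) (hlam : 0 < lam)
    (Φinv : ℝ → ℝ)
    (hΦinv' : ∀ p ∈ Set.Ioo (0:ℝ) 1, stdGaussianCdf (Φinv p) = p)
    (w : ℝ → ℝ)
    (hwdef : ∀ p ∈ Set.Ioo (0:ℝ) 1, w p = stdGaussianCdf ((Φinv p + ν) / lam)) :
    (1 < lam →
        StrictConcaveOn ℝ (Set.Ioo 0 (stdGaussianCdf (ν / (lam ^ 2 - 1)))) w ∧
        StrictConvexOn ℝ (Set.Ioo (stdGaussianCdf (ν / (lam ^ 2 - 1))) 1) w) ∧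
    (lam < 1 →
        StrictConvexOn ℝ (Set.Ioo 0 (stdGaussianCdf (ν / (lam ^ 2 - 1)))) w ∧
        StrictConcaveOn ℝ (Set.Ioo (stdGaussianCdf (ν / (lam ^ 2 - 1))) 1) w) ∧
    (lam = 1 → 0 < ν → StrictConcaveOn ℝ (Set.Ioo 0 1) w) ∧
    (lam = 1 → ν < 0 → StrictConvexOn ℝ (Set.Ioo 0 1) w) := by
  have convex {a b T} (hab : Ioo a b ⊆ Ioo 0 1) (hT : Convex ℝ T)
      (hmaps : MapsTo Φinv (Ioo a b) T) (hsign : ∀ z ∈ interior T, ν < (lam ^ 2 - 1) * z) :=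
    strictConvexOn_of_strictMonoOn_gaussianLikelihoodRatio hlam.ne' hΦinv' hwdef hab hmaps
      (strictMonoOn_gaussianLikelihoodRatio hlam hT hsign)
  have concave {a b T} (hab : Ioo a b ⊆ Ioo 0 1) (hT : Convex ℝ T)
      (hmaps : MapsTo Φinv (Ioo a b) T) (hsign : ∀ z ∈ interior T, (lam ^ 2 - 1) * z < ν) :=
    strictConcaveOn_of_strictAntiOn_gaussianLikelihoodRatio hlam.ne' hΦinv' hwdef hab hmaps
      (strictAntiOn_gaussianLikelihoodRatio hlam hT hsign)
  have lower z : Ioo 0 (stdGaussianCdf z) ⊆ Ioo 0 1 :=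
    Ioo_subset_Ioo_right (stdGaussianCdf_mem_Ioo z).2.le
  have upper z : Ioo (stdGaussianCdf z) 1 ⊆ Ioo 0 1 :=
    Ioo_subset_Ioo_left (stdGaussianCdf_mem_Ioo z).1.le
  have below := mapsTo_Ioo_zero_stdGaussianCdf hΦinv'
  have above := mapsTo_Ioo_stdGaussianCdf_one hΦinv'
  refine ⟨fun h1 => ?_, fun h1 => ?_, fun h1 hν => ?_, fun h1 hν => ?_⟩
  · have hc : 0 < lam ^ 2 - 1 := by nlinarith
    exact ⟨concave (lower _) (convex_Iio _) (below _) fun z hz =>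
        (lt_div_iff₀' hc).1 (mem_Iio.1 (interior_subset hz)),
      convex (upper _) (convex_Ioi _) (above _) fun z hz =>
        (div_lt_iff₀' hc).1 (mem_Ioi.1 (interior_subset hz))⟩
  · have hc : lam ^ 2 - 1 < 0 := by nlinarith
    exact ⟨convex (lower _) (convex_Iio _) (below _) fun z hz =>
        (lt_div_iff_of_neg' hc).1 (mem_Iio.1 (interior_subset hz)),
      concave (upper _) (convex_Ioi _) (above _) fun z hz =>
        (div_lt_iff_of_neg' hc).1 (mem_Ioi.1 (interior_subset hz))⟩
  · exact concave subset_rfl convex_univ (mapsTo_univ _ _) fun z _ => by simpa [h1] using hν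
  · exact convex subset_rfl convex_univ (mapsTo_univ _ _) fun z _ => by simpa [h1] using hν

/-- shape of `w(p) = Φ((Φ⁻¹(p)+ν)/λ)`, with `z₀ = ν/(λ²−1)` when `λ ≠ 1`:
(a) if `λ>1`, `w` is strictly concave on `(0,Φ(z₀))` and strictly convex on `(Φ(z₀),1)`;
(b) if `λ∈(0,1)`, `w` is strictly convex on `(0,Φ(z₀))` and strictly concave on `(Φ(z₀),1)`;
(c) if `λ=1` and `ν>0`, `w` is strictly concave on `(0,1)`;
(d) if `λ=1` and `ν<0`, `w` is strictly convex on `(0,1)`. -/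
theorem stmt4 (lam ν : ℝ) (hlam : 0 < lam)
    (Φinv : ℝ → ℝ)
    (hΦinv : ∀ z : ℝ, Φinv (stdGaussianCdf z) = z)
    (hΦinv' : ∀ p ∈ Set.Ioo (0:ℝ) 1, stdGaussianCdf (Φinv p) = p)
    (w : ℝ → ℝ)
    (hwdef : ∀ p ∈ Set.Ioo (0:ℝ) 1, w p = stdGaussianCdf ((Φinv p + ν) / lam))
    (hw0 : w 0 = 0) (hw1 : w 1 = 1) :
    (1 < lam →
        StrictConcaveOn ℝ (Set.Ioo 0 (stdGaussianCdf (ν / (lam ^ 2 - 1)))) w ∧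
        StrictConvexOn ℝ (Set.Ioo (stdGaussianCdf (ν / (lam ^ 2 - 1))) 1) w) ∧
    (lam < 1 →
        StrictConvexOn ℝ (Set.Ioo 0 (stdGaussianCdf (ν / (lam ^ 2 - 1)))) w ∧
        StrictConcaveOn ℝ (Set.Ioo (stdGaussianCdf (ν / (lam ^ 2 - 1))) 1) w) ∧
    (lam = 1 → 0 < ν → StrictConcaveOn ℝ (Set.Ioo 0 1) w) ∧
    (lam = 1 → ν < 0 → StrictConvexOn ℝ (Set.Ioo 0 1) w) :=
  stmt4_general lam ν hlam Φinv hΦinv' w hwdef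
end

section
/- Let T > 0, θ > 0, and let a:[0,T)→ℝ be continuous with a(t) > 0 for all t∈[0,T) and limsup_{t↑T} a(t)/(θ√(T−t)) < 1. Then the backward ODE (♦) admits a maximal positive solution Ȳ (a positive solution with Ȳ(t) ≥ Y(t) for all t and every positive solution Y). Moreover, a function Y is a positive solution to the backward ODE (♦) if and only if there exists η ∈ (0, Ȳ(0)] such that Y solves the forward initial-value problem Y'(t) = −f(t,Y(t)) for t∈[0,T) with Y(0) = η; and for each such η this forward problem has a unique solution. -/
open MeasureTheory Set Filter Topology

/-- Absolute continuity of `Y` on the interval `[a,b]` (classical ε–δ definition over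
finite families of non-overlapping subintervals). -/
def AbsContOn (Y : ℝ → ℝ) (a b : ℝ) : Prop :=
  ∀ ε > (0:ℝ), ∃ δ > (0:ℝ), ∀ n : ℕ, ∀ I : Fin n → ℝ × ℝ,
    (∀ i, a ≤ (I i).1 ∧ (I i).1 ≤ (I i).2 ∧ (I i).2 ≤ b) →
    (∀ i j, i ≠ j → Disjoint (Set.Ioo (I i).1 (I i).2) (Set.Ioo (I j).1 (I j).2)) →
    (∑ i, ((I i).2 - (I i).1)) < δ →
    (∑ i, |Y (I i).2 - Y (I i).1|) < ε

/-- The right-hand side `f(t,y) = θ² y/(√y + a(t))²` for `y>0`, with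
`f(t,0) = θ²` if `a(t)=0` and `f(t,0) = 0` otherwise. -/
noncomputable def fODE (θ : ℝ) (a : ℝ → ℝ) (t y : ℝ) : ℝ :=
  if 0 < y then θ ^ 2 * y / (Real.sqrt y + a t) ^ 2
  else if a t = 0 then θ ^ 2 else 0

/-- A solution to the backward ODE (♦): `Y : [0,T] → [0,∞)` absolutely continuous,
right-differentiable on `[0,T)` with right-continuous right derivative,
`Y'₊(t) = −f(t,Y(t))` on `[0,T)`, and `Y(T) = 0`. -/
def DiamondSol (T θ : ℝ) (a : ℝ → ℝ) (Y : ℝ → ℝ) : Prop :=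
  (∀ t ∈ Set.Icc 0 T, 0 ≤ Y t) ∧
  AbsContOn Y 0 T ∧
  (∀ t ∈ Set.Ico 0 T, HasDerivWithinAt Y (-(fODE θ a t (Y t))) (Set.Ici t) t) ∧
  (∀ t ∈ Set.Ico 0 T,
      ContinuousWithinAt (fun s => fODE θ a s (Y s)) (Set.Ico t T) t) ∧
  Y T = 0

/-- A solution in `C([0,T]) ∩ C¹([0,T))` of the forward initial-value problem
`Y'(t) = −f(t,Y(t))` on `[0,T)`, `Y(0) = η`, with values in `[0,∞)`. -/
noncomputable def ForwardSol (T θ : ℝ) (a : ℝ → ℝ) (η : ℝ) (Y : ℝ → ℝ) : Prop :=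
  ContinuousOn Y (Set.Icc 0 T) ∧ (∀ t ∈ Set.Icc 0 T, 0 ≤ Y t) ∧ Y 0 = η ∧
    ∀ t ∈ Set.Ico 0 T, HasDerivWithinAt Y (-(fODE θ a t (Y t))) (Set.Ico 0 T) t

/-!
For `a(t) > 0` the right-hand side is `f(t,y) = θ² (√y / (√y + a(t)))²`: it is bounded by `θ²`
and `θ²/a(t)²`-Lipschitz in `y`, so on every `[0,b]` with `b < T` forward solutions exist, are
unique and are ordered by their initial values; being `θ²`-Lipschitz they extend to `t = T`.
A positive solution of (♦) is the same as a forward solution with `Y(0) > 0` and `Y(T) = 0`.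

Near `T` we have `a(t) ≤ c θ √(T - t)` with `c < 1`, which makes `β²θ²(T - t)` a strict
supersolution when `β + c < 1`; hence small initial values give `Y(T) = 0`. Initial values with
`Y(T) = 0` are bounded by `θ²T`, and by continuous dependence on the initial value (Grönwall)
their supremum is again one. Its solution `Ȳ` is maximal, and every forward solution starting
in `(0, Ȳ(0)]` lies between `0` and `Ȳ`, so it also vanishes at `T`.
-/

open scoped NNReal

section RightDerivODE

variable {v : ℝ → ℝ → ℝ} {K : ℝ≥0} {f g : ℝ → ℝ} {a b : ℝ}

theorem ODE_solution_le_of_mem_Icc_right (hv : ∀ t ∈ Ico a b, LipschitzWith K (v t))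
    (hf : ContinuousOn f (Icc a b))
    (hf' : ∀ t ∈ Ico a b, HasDerivWithinAt f (v t (f t)) (Ici t) t)
    (hg : ContinuousOn g (Icc a b))
    (hg' : ∀ t ∈ Ico a b, HasDerivWithinAt g (v t (g t)) (Ici t) t)
    (ha : f a ≤ g a) : ∀ t ∈ Icc a b, f t ≤ g t := by
  intro t ht
  by_contra! hlt
  have hsub : Icc a t ⊆ Icc a b := Icc_subset_Icc_right ht.2
  -- two solutions that cross must meet, and they agree from then on
  obtain ⟨s, hs, hfg⟩ : ∃ s ∈ Icc a t, (g - f) s = 0 :=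
    intermediate_value_Icc' ht.1 ((hg.sub hf).mono hsub)
      ⟨by simpa using hlt.le, by simpa using ha⟩
  have hsub' : Icc s t ⊆ Icc a b := (Icc_subset_Icc_left hs.1).trans hsub
  have hIco : ∀ r ∈ Ico s t, r ∈ Ico a b := fun r hr => ⟨hs.1.trans hr.1, hr.2.trans_le ht.2⟩
  have heq := ODE_solution_unique_of_mem_Icc_right (s := fun _ => univ)
    (fun r hr => (hv r (hIco r hr)).lipschitzOnWith) (hf.mono hsub')
    (fun r hr => hf' r (hIco r hr)) (fun _ _ => trivial) (hg.mono hsub')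
    (fun r hr => hg' r (hIco r hr)) (fun _ _ => trivial) (sub_eq_zero.1 hfg).symm
    ⟨hs.2, le_rfl⟩
  exact hlt.ne' heq

theorem mul_exp_le_of_deriv_right_ge {f' : ℝ → ℝ} {L : ℝ} (hf : ContinuousOn f (Icc a b))
    (hf' : ∀ t ∈ Ico a b, HasDerivWithinAt f (f' t) (Ici t) t)
    (bound : ∀ t ∈ Ico a b, -(L * f t) ≤ f' t) :
    ∀ t ∈ Icc a b, f a * Real.exp (-L * (t - a)) ≤ f t := by
  intro t ht
  have key := le_gronwallBound_of_liminf_deriv_right_le (f := fun t => -f t) (f' := fun t => -f' t)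
    (δ := -f a) (K := -L) (ε := 0) hf.neg
    (fun r hr _ hlt => (hf' r hr).neg.liminf_right_slope_le hlt) le_rfl
    (fun r hr => by linarith [bound r hr]) t ht
  rw [gronwallBound_ε0] at key
  linarith

end RightDerivODE

theorem exists_forall_mem_Icc_hasDerivWithinAt_of_lipschitzWith {E : Type*}
    [NormedAddCommGroup E] [NormedSpace ℝ E] [CompleteSpace E] {v : ℝ → E → E} {a b : ℝ}
    {K M : ℝ≥0} (hab : a ≤ b) (hv : ∀ t ∈ Icc a b, LipschitzWith K (v t))
    (hcont : ∀ x, ContinuousOn (v · x) (Icc a b)) (hM : ∀ t ∈ Icc a b, ∀ x, ‖v t x‖ ≤ M)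
    (x₀ : E) :
    ∃ α : ℝ → E, α a = x₀ ∧ ∀ t ∈ Icc a b, HasDerivWithinAt α (v t (α t)) (Icc a b) t := by
  have hpl : IsPicardLindelof v (⟨a, left_mem_Icc.2 hab⟩ : Icc a b) x₀
      (M * (b - a).toNNReal) 0 M K :=
    { lipschitzOnWith := fun t ht => (hv t ht).lipschitzOnWith
      continuousOn := fun x _ => hcont x
      norm_le := fun t ht x _ => hM t ht x
      mul_max_le := by simp [hab] }
  exact hpl.exists_eq_forall_mem_Icc_hasDerivWithinAt₀

section AbsContOn

variable {Y : ℝ → ℝ} {a b : ℝ}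

theorem AbsContOn.continuousOn (h : AbsContOn Y a b) : ContinuousOn Y (Icc a b) := by
  intro x hx
  rw [Metric.continuousWithinAt_iff]
  intro ε hε
  obtain ⟨δ, hδ, hY⟩ := h ε hε
  refine ⟨δ, hδ, fun {z} hz hzx => ?_⟩
  have key := hY 1 (fun _ => (min z x, max z x)) (fun _ => ⟨le_min hz.1 hx.1, min_le_max,
    max_le hz.2 hx.2⟩) (fun i j hij => absurd (Subsingleton.elim i j) hij)
  rw [Real.dist_eq] at hzx ⊢
  rcases le_total z x with hzx' | hzx' <;>
    simp_all [abs_sub_comm, abs_of_nonneg, abs_of_nonpos]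

theorem LipschitzOnWith.absContOn {K : ℝ≥0} (h : LipschitzOnWith K Y (Icc a b)) :
    AbsContOn Y a b := by
  intro ε hε
  refine ⟨ε / (K + 1), by positivity, fun n I hI _ hsum => ?_⟩
  have hterm : ∀ i, |Y (I i).2 - Y (I i).1| ≤ K * ((I i).2 - (I i).1) := fun i => by
    obtain ⟨h1, h2, h3⟩ := hI i
    have := h.dist_le_mul (I i).2 ⟨h1.trans h2, h3⟩ (I i).1 ⟨h1, h2.trans h3⟩
    rwa [Real.dist_eq, Real.dist_eq, abs_of_nonneg (sub_nonneg.2 h2)] at this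
  calc ∑ i, |Y (I i).2 - Y (I i).1| ≤ ∑ i, (K : ℝ) * ((I i).2 - (I i).1) :=
        Finset.sum_le_sum fun i _ => hterm i
    _ ≤ (K + 1) * ∑ i, ((I i).2 - (I i).1) := by
        rw [← Finset.mul_sum]
        exact mul_le_mul_of_nonneg_right (by linarith)
          (Finset.sum_nonneg fun i _ => sub_nonneg.2 (hI i).2.1)
    _ < (K + 1) * (ε / (K + 1)) := by gcongr
    _ = ε := by field_simp

end AbsContOn

theorem sq_div_add_sub_sq_div_add_le {u w A : ℝ} (hA : 0 < A) (hw : 0 ≤ w) (hwu : w ≤ u) :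
    (u / (u + A)) ^ 2 - (w / (w + A)) ^ 2 ≤ (u ^ 2 - w ^ 2) / A ^ 2 := by
  have hu : 0 ≤ u := hw.trans hwu
  have hsub_le : u / (u + A) - w / (w + A) ≤ (u - w) / A := by
    rw [div_sub_div _ _ (by positivity) (by positivity), div_le_div_iff₀ (by positivity) hA]
    nlinarith [mul_nonneg (sub_nonneg.2 hwu) (mul_nonneg hu hw),
      mul_nonneg (sub_nonneg.2 hwu) (mul_nonneg hu hA.le),
      mul_nonneg (sub_nonneg.2 hwu) (mul_nonneg hw hA.le)]
  have hadd_le : u / (u + A) + w / (w + A) ≤ (u + w) / A := by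
    rw [add_div]
    gcongr <;> linarith
  calc (u / (u + A)) ^ 2 - (w / (w + A)) ^ 2
      = (u / (u + A) - w / (w + A)) * (u / (u + A) + w / (w + A)) := by ring
    _ ≤ (u - w) / A * ((u + w) / A) :=
        mul_le_mul hsub_le hadd_le (by positivity) (div_nonneg (sub_nonneg.2 hwu) hA.le)
    _ = (u ^ 2 - w ^ 2) / A ^ 2 := by field_simp; ring

section RightHandSide

variable {θ : ℝ} {a Y : ℝ → ℝ} {s : Set ℝ} {t y : ℝ}

theorem fODE_eq_sq (ha : 0 < a t) :
    fODE θ a t y = θ ^ 2 * (√y / (√y + a t)) ^ 2 := by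
  rcases lt_or_ge 0 y with hy | hy
  · rw [fODE, if_pos hy, div_pow, Real.sq_sqrt hy.le, mul_div_assoc]
  · rw [fODE, if_neg hy.not_gt, if_neg ha.ne', Real.sqrt_eq_zero'.2 hy]
    simp

theorem fODE_nonneg (ha : 0 < a t) : 0 ≤ fODE θ a t y := by
  rw [fODE_eq_sq ha]
  positivity

theorem fODE_le_sq (ha : 0 < a t) : fODE θ a t y ≤ θ ^ 2 := by
  have : √y / (√y + a t) ≤ 1 := div_le_one_of_le₀ (by linarith) (by positivity)
  calc fODE θ a t y = θ ^ 2 * (√y / (√y + a t)) ^ 2 := fODE_eq_sq ha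
    _ ≤ θ ^ 2 * 1 ^ 2 := by gcongr
    _ = θ ^ 2 := by ring

theorem fODE_le_mul (ha : 0 < a t) (hy : 0 ≤ y) : fODE θ a t y ≤ θ ^ 2 / a t ^ 2 * y := by
  have key := sq_div_add_sub_sq_div_add_le ha le_rfl (Real.sqrt_nonneg y)
  simp only [zero_div, zero_add, ne_eq, OfNat.ofNat_ne_zero, not_false_eq_true, zero_pow,
    sub_zero, Real.sq_sqrt hy] at key
  calc fODE θ a t y = θ ^ 2 * (√y / (√y + a t)) ^ 2 := fODE_eq_sq ha
    _ ≤ θ ^ 2 * (y / a t ^ 2) := by gcongr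
    _ = θ ^ 2 / a t ^ 2 * y := by ring

theorem fODE_mono (ha : 0 < a t) : Monotone (fODE θ a t) := by
  intro y₁ y₂ hy
  have hsqrt : √y₁ ≤ √y₂ := Real.sqrt_le_sqrt hy
  have : √y₁ / (√y₁ + a t) ≤ √y₂ / (√y₂ + a t) := by
    rw [div_le_div_iff₀ (by positivity) (by positivity)]
    nlinarith
  rw [fODE_eq_sq ha, fODE_eq_sq ha]
  gcongr

theorem lipschitzWith_fODE {K : ℝ≥0} (ha : 0 < a t) (hK : θ ^ 2 / a t ^ 2 ≤ K) :
    LipschitzWith K (fODE θ a t) := by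
  refine LipschitzWith.of_le_add_mul K fun y₁ y₂ => ?_
  have hdist : 0 ≤ (K : ℝ) * dist y₁ y₂ := by positivity
  rcases le_total y₁ y₂ with hy | hy
  · linarith [fODE_mono (θ := θ) ha hy]
  have key := sq_div_add_sub_sq_div_add_le ha (Real.sqrt_nonneg y₂) (Real.sqrt_le_sqrt hy)
  rw [Real.sq_sqrt', Real.sq_sqrt'] at key
  have hmax : max y₁ 0 - max y₂ 0 ≤ dist y₁ y₂ :=
    (le_abs_self _).trans ((abs_max_sub_max_le_abs _ _ _).trans_eq (Real.dist_eq _ _).symm)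
  calc fODE θ a t y₁ = fODE θ a t y₂ + θ ^ 2 * ((√y₁ / (√y₁ + a t)) ^ 2
        - (√y₂ / (√y₂ + a t)) ^ 2) := by rw [fODE_eq_sq ha, fODE_eq_sq ha]; ring
    _ ≤ fODE θ a t y₂ + θ ^ 2 * ((max y₁ 0 - max y₂ 0) / a t ^ 2) := by gcongr
    _ = fODE θ a t y₂ + θ ^ 2 / a t ^ 2 * (max y₁ 0 - max y₂ 0) := by ring
    _ ≤ fODE θ a t y₂ + K * dist y₁ y₂ := by
        exact add_le_add_right (mul_le_mul hK hmax
          (sub_nonneg.2 (max_le_max hy le_rfl)) K.2) _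

theorem ContinuousOn.fODE (hY : ContinuousOn Y s)
    (hac : ContinuousOn a s) (hapos : ∀ t ∈ s, 0 < a t) :
    ContinuousOn (fun t => fODE θ a t (Y t)) s := by
  refine ContinuousOn.congr (f := fun t => θ ^ 2 * (√(Y t) / (√(Y t) + a t)) ^ 2) ?_
    fun t ht => fODE_eq_sq (hapos t ht)
  exact continuousOn_const.mul ((hY.sqrt.div (hY.sqrt.add hac)
    fun t ht => (add_pos_of_nonneg_of_pos (Real.sqrt_nonneg _) (hapos t ht)).ne').pow 2)

theorem lipschitzOnWith_of_hasDerivWithinAt_fODE (hs : Convex ℝ s) (hapos : ∀ t ∈ s, 0 < a t)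
    (hY : ∀ t ∈ s, HasDerivWithinAt Y (-fODE θ a t (Y t)) s t) :
    LipschitzOnWith (θ ^ 2).toNNReal Y s := by
  refine hs.lipschitzOnWith_of_nnnorm_hasDerivWithin_le hY fun t ht => ?_
  rw [← NNReal.coe_le_coe, coe_nnnorm, Real.coe_toNNReal _ (sq_nonneg θ), norm_neg,
    Real.norm_of_nonneg (fODE_nonneg (hapos t ht))]
  exact fODE_le_sq (hapos t ht)

end RightHandSide

def IsRightSol (θ : ℝ) (a : ℝ → ℝ) (b : ℝ) (Y : ℝ → ℝ) : Prop :=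
  ContinuousOn Y (Icc 0 b) ∧ ∀ t ∈ Ico 0 b, HasDerivWithinAt Y (-fODE θ a t (Y t)) (Ici t) t

section Solutions

variable {T θ b : ℝ} {a f g Y : ℝ → ℝ}

theorem IsRightSol.mono {c : ℝ} (h : IsRightSol θ a b Y) (hcb : c ≤ b) : IsRightSol θ a c Y :=
  ⟨h.1.mono (Icc_subset_Icc_right hcb), fun t ht => h.2 t ⟨ht.1, ht.2.trans_le hcb⟩⟩

theorem isRightSol_of_hasDerivWithinAt_Icc
    (h : ∀ t ∈ Icc 0 b, HasDerivWithinAt Y (-fODE θ a t (Y t)) (Icc 0 b) t) :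
    IsRightSol θ a b Y :=
  ⟨fun t ht => (h t ht).continuousWithinAt, fun t ht => (h t ⟨ht.1, ht.2.le⟩).mono_of_mem_nhdsWithin
    (mem_of_superset (Icc_mem_nhdsGE ht.2) (Icc_subset_Icc_left ht.1))⟩

theorem isRightSol_zero (hapos : ∀ t ∈ Ico 0 T, 0 < a t) (hbT : b ≤ T) :
    IsRightSol θ a b fun _ => 0 := by
  refine ⟨continuousOn_const, fun t ht => ?_⟩
  have h0 : fODE θ a t 0 = 0 := by
    rw [fODE_eq_sq (hapos t ⟨ht.1, ht.2.trans_le hbT⟩)]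
    simp
  rw [h0, neg_zero]
  exact hasDerivWithinAt_const t (Ici t) 0

theorem ForwardSol.isRightSol {η : ℝ} (h : ForwardSol T θ a η Y) : IsRightSol θ a T Y :=
  ⟨h.1, fun t ht => (h.2.2.2 t ht).mono_of_mem_nhdsWithin
    (mem_of_superset (Ico_mem_nhdsGE ht.2) (Ico_subset_Ico_left ht.1))⟩

theorem DiamondSol.isRightSol (h : DiamondSol T θ a Y) : IsRightSol θ a T Y :=
  ⟨AbsContOn.continuousOn h.2.1, h.2.2.1⟩

theorem exists_forall_sq_div_sq_le (hac : ContinuousOn a (Ico 0 T))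
    (hapos : ∀ t ∈ Ico 0 T, 0 < a t) (hbT : b < T) :
    ∃ K : ℝ≥0, ∀ t ∈ Icc 0 b, θ ^ 2 / a t ^ 2 ≤ K := by
  have hsub : Icc 0 b ⊆ Ico 0 T := fun t ht => ⟨ht.1, ht.2.trans_lt hbT⟩
  obtain ⟨C, hC⟩ := isCompact_Icc.bddAbove_image (f := fun t => θ ^ 2 / a t ^ 2)
    (continuousOn_const.div ((hac.mono hsub).pow 2) fun t ht => (pow_pos (hapos t (hsub ht)) 2).ne')
  exact ⟨C.toNNReal, fun t ht => (hC ⟨t, ht, rfl⟩).trans (Real.le_coe_toNNReal C)⟩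

theorem exists_lipschitzWith_neg_fODE (hac : ContinuousOn a (Ico 0 T))
    (hapos : ∀ t ∈ Ico 0 T, 0 < a t) (hbT : b < T) :
    ∃ K : ℝ≥0, ∀ t ∈ Icc 0 b, LipschitzWith K fun y => -fODE θ a t y := by
  obtain ⟨K, hK⟩ := exists_forall_sq_div_sq_le (θ := θ) hac hapos hbT
  exact ⟨K, fun t ht => (lipschitzWith_fODE (hapos t ⟨ht.1, ht.2.trans_lt hbT⟩) (hK t ht)).neg⟩

theorem IsRightSol.le_of_le (hT : 0 < T) (hac : ContinuousOn a (Ico 0 T))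
    (hapos : ∀ t ∈ Ico 0 T, 0 < a t) (hbT : b ≤ T) (hf : IsRightSol θ a b f)
    (hg : IsRightSol θ a b g) (h0 : f 0 ≤ g 0) : ∀ t ∈ Icc 0 b, f t ≤ g t := by
  have hlt : ∀ t ∈ Icc 0 b, t < T → f t ≤ g t := fun t ht htT => by
    obtain ⟨K, hK⟩ := exists_lipschitzWith_neg_fODE (θ := θ) hac hapos htT
    exact ODE_solution_le_of_mem_Icc_right (fun r hr => hK r (Ico_subset_Icc_self hr))
      (hf.mono ht.2).1 (hf.mono ht.2).2 (hg.mono ht.2).1 (hg.mono ht.2).2 h0 t ⟨ht.1, le_rfl⟩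
  intro t ht
  rcases (ht.2.trans hbT).lt_or_eq with htT | rfl
  · exact hlt t ht htT
  -- at `t = b = T`, pass to the limit from the left
  obtain rfl : b = t := le_antisymm hbT ht.2
  have hcl : closure (Ico 0 b) = Icc 0 b := closure_Ico hT.ne
  exact le_on_closure (fun r hr => hlt r (Ico_subset_Icc_self hr) hr.2) (hcl ▸ hf.1) (hcl ▸ hg.1)
    (hcl ▸ ht)

theorem IsRightSol.eqOn (hT : 0 < T) (hac : ContinuousOn a (Ico 0 T))
    (hapos : ∀ t ∈ Ico 0 T, 0 < a t) (hbT : b ≤ T) (hf : IsRightSol θ a b f)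
    (hg : IsRightSol θ a b g) (h0 : f 0 = g 0) : EqOn f g (Icc 0 b) := fun t ht =>
  le_antisymm (hf.le_of_le hT hac hapos hbT hg h0.le t ht)
    (hg.le_of_le hT hac hapos hbT hf h0.ge t ht)

theorem exists_forall_isRightSol_dist_le (hac : ContinuousOn a (Ico 0 T))
    (hapos : ∀ t ∈ Ico 0 T, 0 < a t) (hbT : b < T) :
    ∃ K : ℝ≥0, ∀ f g, IsRightSol θ a b f → IsRightSol θ a b g →
      ∀ t ∈ Icc 0 b, dist (f t) (g t) ≤ dist (f 0) (g 0) * Real.exp (K * t) := by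
  obtain ⟨K, hK⟩ := exists_lipschitzWith_neg_fODE (θ := θ) hac hapos hbT
  refine ⟨K, fun f g hf hg t ht => ?_⟩
  simpa using dist_le_of_trajectories_ODE_of_mem (s := fun _ => univ)
    (fun r hr => (hK r (Ico_subset_Icc_self hr)).lipschitzOnWith) hf.1 hf.2 (fun _ _ => trivial)
    hg.1 hg.2 (fun _ _ => trivial) le_rfl t ht

theorem exists_hasDerivWithinAt_Icc_fODE (hac : ContinuousOn a (Ico 0 T))
    (hapos : ∀ t ∈ Ico 0 T, 0 < a t) (hb : 0 ≤ b) (hbT : b < T) (η : ℝ) :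
    ∃ F : ℝ → ℝ, F 0 = η ∧
      ∀ t ∈ Icc 0 b, HasDerivWithinAt F (-fODE θ a t (F t)) (Icc 0 b) t := by
  have hsub : Icc 0 b ⊆ Ico 0 T := fun t ht => ⟨ht.1, ht.2.trans_lt hbT⟩
  obtain ⟨K, hK⟩ := exists_lipschitzWith_neg_fODE (θ := θ) hac hapos hbT
  refine exists_forall_mem_Icc_hasDerivWithinAt_of_lipschitzWith (M := (θ ^ 2).toNNReal) hb hK
    (fun y => (continuousOn_const.fODE (hac.mono hsub) fun t ht => hapos t (hsub ht)).neg)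
    (fun t ht y => ?_) η
  rw [norm_neg, Real.norm_of_nonneg (fODE_nonneg (hapos t (hsub ht))),
    Real.coe_toNNReal _ (sq_nonneg θ)]
  exact fODE_le_sq (hapos t (hsub ht))

theorem ForwardSol.lipschitzOnWith (hT : 0 < T) (hapos : ∀ t ∈ Ico 0 T, 0 < a t) {η : ℝ}
    (h : ForwardSol T θ a η Y) : LipschitzOnWith (θ ^ 2).toNNReal Y (Icc 0 T) := by
  have hcl : closure (Ico 0 T) = Icc 0 T := closure_Ico hT.ne
  rw [← hcl]
  exact (lipschitzOnWith_of_hasDerivWithinAt_fODE (convex_Ico 0 T) hapos h.2.2.2).closure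
    (hcl ▸ h.1)

theorem ForwardSol.antitoneOn (hapos : ∀ t ∈ Ico 0 T, 0 < a t) {η : ℝ}
    (h : ForwardSol T θ a η Y) : AntitoneOn Y (Icc 0 T) := by
  refine antitoneOn_of_hasDerivWithinAt_nonpos (f' := fun t => -fODE θ a t (Y t)) (convex_Icc 0 T)
    h.1 (fun t ht => ?_) fun t ht => ?_
  all_goals simp only [interior_Icc] at ht ⊢
  · exact (h.2.2.2 t (Ioo_subset_Ico_self ht)).mono Ioo_subset_Ico_self
  · exact neg_nonpos.2 (fODE_nonneg (hapos t (Ioo_subset_Ico_self ht)))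

theorem ForwardSol.pos (hac : ContinuousOn a (Ico 0 T)) (hapos : ∀ t ∈ Ico 0 T, 0 < a t)
    {η : ℝ} (h : ForwardSol T θ a η Y) (hη : 0 < η) : ∀ t ∈ Ico 0 T, 0 < Y t := by
  intro t ht
  obtain ⟨K, hK⟩ := exists_forall_sq_div_sq_le (θ := θ) hac hapos ht.2
  -- `f(s, y) ≤ K y` forces exponential decay at worst
  have key := mul_exp_le_of_deriv_right_ge (L := K) (h.isRightSol.mono ht.2.le).1
    (h.isRightSol.mono ht.2.le).2 (fun s hs => ?_) t ⟨ht.1, le_rfl⟩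
  · rw [h.2.2.1] at key
    exact (by positivity : 0 < η * Real.exp (-K * (t - 0))).trans_le key
  · have hs' : s ∈ Ico 0 T := ⟨hs.1, hs.2.trans ht.2⟩
    have hY : 0 ≤ Y s := h.2.1 s (Ico_subset_Icc_self hs')
    have := (fODE_le_mul (θ := θ) (hapos s hs') hY).trans
      (mul_le_mul_of_nonneg_right (hK s (Ico_subset_Icc_self hs)) hY)
    linarith

theorem exists_forwardSol (hT : 0 < T) (hac : ContinuousOn a (Ico 0 T))
    (hapos : ∀ t ∈ Ico 0 T, 0 < a t) {η : ℝ} (hη : 0 ≤ η) : ∃ Y, ForwardSol T θ a η Y := by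
  choose! F hF0 hF using fun b (hb : b ∈ Ico 0 T) =>
    exists_hasDerivWithinAt_Icc_fODE (θ := θ) hac hapos hb.1 hb.2 η
  have hsol : ∀ b ∈ Ico 0 T, IsRightSol θ a b (F b) := fun b hb =>
    isRightSol_of_hasDerivWithinAt_Icc (hF b hb)
  have hmid : ∀ t ∈ Ico 0 T, (t + T) / 2 ∈ Ico 0 T ∧ t < (t + T) / 2 := fun t ht =>
    ⟨⟨by linarith [ht.1], by linarith [ht.2]⟩, by linarith [ht.2]⟩
  -- by uniqueness the local solutions agree, so `t ↦ F ((t + T) / 2) t` glues them together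
  have hglue : ∀ b ∈ Ico 0 T, ∀ t ∈ Icc 0 b, F ((t + T) / 2) t = F b t := by
    intro b hb t ht
    have hc := hmid t ⟨ht.1, ht.2.trans_lt hb.2⟩
    exact ((hsol _ hc.1).mono (min_le_right b _)).eqOn hT hac hapos
      ((min_le_left _ _).trans hb.2.le) ((hsol b hb).mono (min_le_left _ _))
      (by rw [hF0 _ hc.1, hF0 b hb]) ⟨ht.1, le_min ht.2 hc.2.le⟩
  have hlip : LipschitzOnWith (θ ^ 2).toNNReal (fun t => F ((t + T) / 2) t) (Ico 0 T) := by
    refine LipschitzOnWith.of_dist_le_mul fun s hs t ht => ?_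
    have hb : max s t ∈ Ico 0 T := ⟨hs.1.trans (le_max_left _ _), max_lt hs.2 ht.2⟩
    have hs' : s ∈ Icc 0 (max s t) := ⟨hs.1, le_max_left _ _⟩
    have ht' : t ∈ Icc 0 (max s t) := ⟨ht.1, le_max_right _ _⟩
    rw [hglue _ hb s hs', hglue _ hb t ht']
    exact (lipschitzOnWith_of_hasDerivWithinAt_fODE (convex_Icc 0 _)
      (fun r hr => hapos r ⟨hr.1, hr.2.trans_lt hb.2⟩) (hF _ hb)).dist_le_mul s hs' t ht'
  -- a Lipschitz extension supplies the value at the terminal time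
  obtain ⟨Y, hYlip, hY⟩ := hlip.extend_real
  have hYF : ∀ b ∈ Ico 0 T, ∀ t ∈ Icc 0 b, Y t = F b t := fun b hb t ht =>
    (hY ⟨ht.1, ht.2.trans_lt hb.2⟩).symm.trans (hglue b hb t ht)
  have hcl : closure (Ico 0 T) = Icc 0 T := closure_Ico hT.ne
  refine ⟨Y, hYlip.continuous.continuousOn, ?_, ?_, fun t ht => ?_⟩
  · rw [← hcl]
    refine le_on_closure (f := fun _ => 0) (fun t ht => ?_) continuousOn_const
      hYlip.continuous.continuousOn
    rw [hYF t ht t ⟨ht.1, le_rfl⟩]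
    exact (isRightSol_zero hapos ht.2.le).le_of_le hT hac hapos ht.2.le (hsol t ht)
      (by rw [hF0 t ht]; exact hη) t ⟨ht.1, le_rfl⟩
  · rw [hYF 0 ⟨le_rfl, hT⟩ 0 ⟨le_rfl, le_rfl⟩, hF0 0 ⟨le_rfl, hT⟩]
  · obtain ⟨hb, htb⟩ := hmid t ht
    have hnhds : Icc 0 ((t + T) / 2) ∈ 𝓝[Ico 0 T] t :=
      mem_nhdsWithin.2 ⟨Iio _, isOpen_Iio, htb, fun x hx => ⟨hx.2.1, hx.1.le⟩⟩
    rw [hYF _ hb t ⟨ht.1, htb.le⟩]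
    exact ((hF _ hb t ⟨ht.1, htb.le⟩).mono_of_mem_nhdsWithin hnhds).congr_of_eventuallyEq
      (eventually_of_mem hnhds (hYF _ hb)) (hYF _ hb t ⟨ht.1, htb.le⟩)

theorem ForwardSol.le_of_le (hT : 0 < T) (hac : ContinuousOn a (Ico 0 T))
    (hapos : ∀ t ∈ Ico 0 T, 0 < a t) {η₁ η₂ : ℝ} {Y₁ Y₂ : ℝ → ℝ}
    (h₁ : ForwardSol T θ a η₁ Y₁) (h₂ : ForwardSol T θ a η₂ Y₂) (hη : η₁ ≤ η₂) :
    ∀ t ∈ Icc 0 T, Y₁ t ≤ Y₂ t :=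
  h₁.isRightSol.le_of_le hT hac hapos le_rfl h₂.isRightSol (by rwa [h₁.2.2.1, h₂.2.2.1])

theorem ForwardSol.diamondSol (hT : 0 < T) (hac : ContinuousOn a (Ico 0 T))
    (hapos : ∀ t ∈ Ico 0 T, 0 < a t) {η : ℝ} (h : ForwardSol T θ a η Y) (hη : 0 < η)
    (hYT : Y T = 0) : DiamondSol T θ a Y ∧ ∀ t ∈ Ico 0 T, 0 < Y t := by
  refine ⟨⟨h.2.1, (h.lipschitzOnWith hT hapos).absContOn, h.isRightSol.2, fun t ht => ?_, hYT⟩,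
    h.pos hac hapos hη⟩
  exact ((h.1.mono Ico_subset_Icc_self).fODE hac hapos t ht).mono (Ico_subset_Ico_left ht.1)

theorem DiamondSol.forwardSol (hT : 0 < T) (hac : ContinuousOn a (Ico 0 T))
    (hapos : ∀ t ∈ Ico 0 T, 0 < a t) (h : DiamondSol T θ a Y) : ForwardSol T θ a (Y 0) Y := by
  obtain ⟨Z, hZ⟩ := exists_forwardSol hT hac hapos (h.1 0 ⟨le_rfl, hT.le⟩)
  have hYZ : EqOn Y Z (Icc 0 T) :=
    h.isRightSol.eqOn hT hac hapos le_rfl hZ.isRightSol hZ.2.2.1.symm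
  refine ⟨h.isRightSol.1, h.1, rfl, fun t ht => ?_⟩
  rw [hYZ (Ico_subset_Icc_self ht)]
  exact (hZ.2.2.2 t ht).congr (fun s hs => hYZ (Ico_subset_Icc_self hs))
    (hYZ (Ico_subset_Icc_self ht))

theorem ForwardSol.le_sq_mul_sub (hT : 0 < T) (hapos : ∀ t ∈ Ico 0 T, 0 < a t) {η : ℝ}
    (h : ForwardSol T θ a η Y) (hYT : Y T = 0) : ∀ t ∈ Icc 0 T, Y t ≤ θ ^ 2 * (T - t) := by
  intro t ht
  have := (h.lipschitzOnWith hT hapos).dist_le_mul t ht T ⟨hT.le, le_rfl⟩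
  rw [Real.coe_toNNReal _ (sq_nonneg θ), hYT, Real.dist_eq, Real.dist_eq, sub_zero,
    abs_sub_comm t, abs_of_nonneg (sub_nonneg.2 ht.2)] at this
  exact (le_abs_self _).trans this

theorem ForwardSol.apply_eq_zero_of_le_barrier (hθ : 0 < θ) (hapos : ∀ t ∈ Ico 0 T, 0 < a t)
    {β c t₀ η : ℝ} (hβ : 0 < β) (hβc : β + c < 1) (ht₀ : t₀ ∈ Ico 0 T)
    (ha : ∀ s ∈ Ico t₀ T, a s ≤ c * θ * √(T - s)) (h : ForwardSol T θ a η Y)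
    (hY : Y t₀ ≤ β ^ 2 * θ ^ 2 * (T - t₀)) : Y T = 0 := by
  have hsub : Icc t₀ T ⊆ Icc 0 T := Icc_subset_Icc_left ht₀.1
  -- `s ↦ β²θ²(T - s)` is a strict supersolution, hence a barrier from above
  have key := image_le_of_deriv_right_lt_deriv_boundary' (h.1.mono hsub)
    (fun s hs => h.isRightSol.2 s ⟨ht₀.1.trans hs.1, hs.2⟩)
    (B := fun s => β ^ 2 * θ ^ 2 * (T - s)) (B' := fun _ => -(β ^ 2 * θ ^ 2)) hY
    (by fun_prop) (fun s _ => by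
      simpa using (((hasDerivAt_id s).const_sub T).const_mul (β ^ 2 * θ ^ 2)).hasDerivWithinAt)
    (fun s hs hYs => ?_) ⟨ht₀.2.le, le_rfl⟩
  · exact le_antisymm (by simpa using key) (h.2.1 T ⟨ht₀.1.trans ht₀.2.le, le_rfl⟩)
  · have hTs : 0 < T - s := sub_pos.2 hs.2
    set w := β * θ * √(T - s) with hw_def
    have hw : 0 < w := by positivity
    have hsqrt : √(Y s) = w := by
      rw [hYs, ← Real.sqrt_sq hw.le, hw_def, mul_pow, mul_pow, Real.sq_sqrt hTs.le]
    have has : β * a s ≤ c * w := by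
      calc β * a s ≤ β * (c * θ * √(T - s)) := mul_le_mul_of_nonneg_left (ha s hs) hβ.le
        _ = c * w := by ring
    have hk : β < w / (w + a s) := by
      rw [lt_div_iff₀ (by linarith [hapos s ⟨ht₀.1.trans hs.1, hs.2⟩])]
      nlinarith [mul_lt_mul_of_pos_right hβc hw]
    have : θ ^ 2 * β ^ 2 < fODE θ a s (Y s) := by
      rw [fODE_eq_sq (hapos s ⟨ht₀.1.trans hs.1, hs.2⟩), hsqrt]
      exact mul_lt_mul_of_pos_left (pow_lt_pow_left₀ hk hβ.le two_ne_zero) (by positivity)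
    linarith

theorem exists_pos_forall_forwardSol_apply_eq_zero (hT : 0 < T) (hθ : 0 < θ)
    (hapos : ∀ t ∈ Ico 0 T, 0 < a t)
    (hlimsup : ∃ c < (1 : ℝ), ∀ᶠ t in 𝓝[<] T, a t / (θ * √(T - t)) ≤ c) :
    ∃ η > 0, ∀ Y, ForwardSol T θ a η Y → Y T = 0 := by
  obtain ⟨c, hc, hev⟩ := hlimsup
  obtain ⟨l, hl, hsub⟩ := mem_nhdsLT_iff_exists_Ico_subset.1 hev
  have ht₀ : max l 0 ∈ Ico 0 T := ⟨le_max_right _ _, max_lt hl hT⟩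
  have ha : ∀ s ∈ Ico (max l 0) T, a s ≤ c * θ * √(T - s) := by
    intro s hs
    have hle : a s / (θ * √(T - s)) ≤ c := hsub ⟨(le_max_left _ _).trans hs.1, hs.2⟩
    have hTs := sub_pos.2 hs.2
    rwa [div_le_iff₀ (by positivity), ← mul_assoc] at hle
  have hβ : 0 < (1 - c) / 2 := by linarith
  have hT₀ := sub_pos.2 ht₀.2
  refine ⟨((1 - c) / 2) ^ 2 * θ ^ 2 * (T - max l 0), by positivity, fun Y h =>
    h.apply_eq_zero_of_le_barrier hθ hapos hβ (by linarith) ht₀ ha ?_⟩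
  rw [← h.2.2.1]
  exact h.antitoneOn hapos ⟨le_rfl, hT.le⟩ (Ico_subset_Icc_self ht₀) ht₀.1

theorem ForwardSol.apply_eq_zero_of_approx (hT : 0 < T) (hac : ContinuousOn a (Ico 0 T))
    (hapos : ∀ t ∈ Ico 0 T, 0 < a t) {η : ℝ} (h : ForwardSol T θ a η Y)
    (happrox : ∀ ε > 0, ∃ e Y', dist e η < ε ∧ ForwardSol T θ a e Y' ∧ Y' T = 0) : Y T = 0 := by
  have hbound : ∀ t ∈ Ico 0 T, Y t ≤ θ ^ 2 * (T - t) := by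
    intro t ht
    obtain ⟨K, hK⟩ := exists_forall_isRightSol_dist_le (θ := θ) hac hapos ht.2
    refine le_of_forall_pos_lt_add fun ε hε => ?_
    obtain ⟨e, Y', he, h', hY'T⟩ := happrox (ε / Real.exp (K * t)) (by positivity)
    have hdist := hK Y Y' (h.isRightSol.mono ht.2.le) (h'.isRightSol.mono ht.2.le) t
      ⟨ht.1, le_rfl⟩
    rw [h.2.2.1, h'.2.2.1, dist_comm η] at hdist
    have hclose := (lt_div_iff₀ (Real.exp_pos _)).1 he
    have hY' := h'.le_sq_mul_sub hT hapos hY'T t (Ico_subset_Icc_self ht)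
    linarith [le_abs_self (Y t - Y' t), Real.dist_eq (Y t) (Y' t)]
  have hcl : closure (Ico 0 T) = Icc 0 T := closure_Ico hT.ne
  have hT' : T ∈ Icc 0 T := ⟨hT.le, le_rfl⟩
  have := le_on_closure (g := fun t => θ ^ 2 * (T - t)) hbound (hcl ▸ h.1) (by fun_prop)
    (hcl ▸ hT')
  exact le_antisymm (by simpa using this) (h.2.1 T hT')

theorem exists_maximal_forwardSol (hT : 0 < T) (hθ : 0 < θ) (hac : ContinuousOn a (Ico 0 T))
    (hapos : ∀ t ∈ Ico 0 T, 0 < a t)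
    (hlimsup : ∃ c < (1 : ℝ), ∀ᶠ t in 𝓝[<] T, a t / (θ * √(T - t)) ≤ c) :
    ∃ Ybar, ForwardSol T θ a (Ybar 0) Ybar ∧ 0 < Ybar 0 ∧ Ybar T = 0 ∧
      ∀ η Y, ForwardSol T θ a η Y → Y T = 0 → η ≤ Ybar 0 := by
  set G := {η | ∃ Y, ForwardSol T θ a η Y ∧ Y T = 0}
  obtain ⟨η₀, hη₀, h₀⟩ := exists_pos_forall_forwardSol_apply_eq_zero hT hθ hapos hlimsup
  obtain ⟨Y₀, hY₀⟩ := exists_forwardSol hT hac hapos hη₀.le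
  have hG₀ : η₀ ∈ G := ⟨Y₀, hY₀, h₀ Y₀ hY₀⟩
  have hbdd : BddAbove G := ⟨θ ^ 2 * T, fun η ⟨Y, h, hYT⟩ => by
    simpa [h.2.2.1] using h.le_sq_mul_sub hT hapos hYT 0 ⟨le_rfl, hT.le⟩⟩
  have hpos : 0 < sSup G := hη₀.trans_le (le_csSup hbdd hG₀)
  obtain ⟨Ybar, hYbar⟩ := exists_forwardSol hT hac hapos hpos.le
  have hYbarT : Ybar T = 0 := hYbar.apply_eq_zero_of_approx hT hac hapos fun ε hε => by
    obtain ⟨e, ⟨Y, h, hYT⟩, he⟩ := exists_lt_of_lt_csSup ⟨η₀, hG₀⟩ (sub_lt_self (sSup G) hε)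
    have := le_csSup hbdd ⟨Y, h, hYT⟩
    exact ⟨e, Y, by rw [Real.dist_eq, abs_sub_lt_iff]; constructor <;> linarith, h, hYT⟩
  have h0 : Ybar 0 = sSup G := hYbar.2.2.1
  refine ⟨Ybar, by rwa [h0], h0 ▸ hpos, hYbarT, fun η Y h hYT => ?_⟩
  rw [h0]
  exact le_csSup hbdd ⟨Y, h, hYT⟩

end Solutions

/-- if `a > 0` is continuous on `[0,T)` and
`limsup_{t↑T} a(t)/(θ√(T−t)) < 1`, then (♦) has a maximal positive solution `Ȳ`;
moreover `Y` is a positive solution of (♦) iff it solves the forward problem with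
initial value `η ∈ (0, Ȳ(0)]`, and for each such `η` the forward problem has a
unique solution. -/
theorem stmt11 (T θ : ℝ) (hT : 0 < T) (hθ : 0 < θ)
    (a : ℝ → ℝ) (hac : ContinuousOn a (Set.Ico 0 T))
    (hapos : ∀ t ∈ Set.Ico 0 T, 0 < a t)
    (hlimsup : ∃ c < (1:ℝ), ∀ᶠ t in 𝓝[<] T, a t / (θ * Real.sqrt (T - t)) ≤ c) :
    ∃ Ybar : ℝ → ℝ,
      (DiamondSol T θ a Ybar ∧ ∀ t ∈ Set.Ico 0 T, 0 < Ybar t) ∧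
      (∀ Y : ℝ → ℝ, DiamondSol T θ a Y → (∀ t ∈ Set.Ico 0 T, 0 < Y t) →
        ∀ t ∈ Set.Icc 0 T, Y t ≤ Ybar t) ∧
      (∀ Y : ℝ → ℝ,
        (DiamondSol T θ a Y ∧ ∀ t ∈ Set.Ico 0 T, 0 < Y t) ↔
          ∃ η ∈ Set.Ioc 0 (Ybar 0), ForwardSol T θ a η Y) ∧
      ∀ η ∈ Set.Ioc 0 (Ybar 0),
        (∃ Y : ℝ → ℝ, ForwardSol T θ a η Y) ∧
        ∀ Y₁ Y₂ : ℝ → ℝ, ForwardSol T θ a η Y₁ → ForwardSol T θ a η Y₂ →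
          Set.EqOn Y₁ Y₂ (Set.Icc 0 T) := by
  obtain ⟨Ybar, hYbar, hpos, hYbarT, hmax⟩ := exists_maximal_forwardSol hT hθ hac hapos hlimsup
  have hT' : T ∈ Icc 0 T := ⟨hT.le, le_rfl⟩
  have hchar : ∀ Y, (DiamondSol T θ a Y ∧ ∀ t ∈ Ico 0 T, 0 < Y t) ↔
      ∃ η ∈ Ioc 0 (Ybar 0), ForwardSol T θ a η Y := by
    refine fun Y => ⟨fun ⟨hd, hYpos⟩ => ?_, fun ⟨η, hη, h⟩ => ?_⟩
    · have h := hd.forwardSol hT hac hapos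
      exact ⟨Y 0, ⟨hYpos 0 ⟨le_rfl, hT⟩, hmax _ Y h hd.2.2.2.2⟩, h⟩
    · have hYT : Y T ≤ Ybar T := h.le_of_le hT hac hapos hYbar hη.2 T hT'
      exact h.diamondSol hT hac hapos hη.1 (le_antisymm (hYbarT ▸ hYT) (h.2.1 T hT'))
  refine ⟨Ybar, (hchar Ybar).2 ⟨Ybar 0, ⟨hpos, le_rfl⟩, hYbar⟩, fun Y hd hYpos t ht => ?_, hchar,
    fun η hη => ⟨exists_forwardSol hT hac hapos hη.1.le, fun Y₁ Y₂ h₁ h₂ =>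
      h₁.isRightSol.eqOn hT hac hapos le_rfl h₂.isRightSol (h₁.2.2.1.trans h₂.2.2.1.symm)⟩⟩
  obtain ⟨η, hη, h⟩ := (hchar Y).1 ⟨hd, hYpos⟩
  exact h.le_of_le hT hac hapos hYbar hη.2 t ht
end
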